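/- Let R⁺ = ℚ[a0, a1, b0, b1]/J⁺ with J⁺ as in Theorem coho2n, and R⁻ = ℚ[a0, a1, b0]/J⁻ with J⁻ as in Theorem coho3n. Then R⁺ and R⁻ are not isomorphic as ℚ-algebras. -/

import Mathlib

open MvPolynomial

noncomputable def pa0 : MvPolynomial (Fin 4) ℚ := X 0
noncomputable def pa1 : MvPolynomial (Fin 4) ℚ := X 1
noncomputable def pb0 : MvPolynomial (Fin 4) ℚ := X 2
noncomputable def pb1 : MvPolynomial (Fin 4) ℚ := X 3

noncomputable def Jplus : Ideal (MvPolynomial (Fin 4) ℚ) :=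
  Ideal.span {pa1 * pb1, pb0 * pb1, pa0 * pa1 - pb0 * pa1, pa0 * pa1 + 8 * pa1 ^ 2,
    pa0 * pb1 + 24 * pb1 ^ 2, 4 * pb0 ^ 2 + 8 * pa1 * pb0 - 3 * pa0 * pb0,
    pa0 ^ 2 * pa1, pa0 ^ 2 * pb0, 3 * pa0 ^ 3 + 22 * pa0 ^ 2 * pb1}

noncomputable def ma0 : MvPolynomial (Fin 3) ℚ := X 0
noncomputable def ma1 : MvPolynomial (Fin 3) ℚ := X 1
noncomputable def mb0 : MvPolynomial (Fin 3) ℚ := X 2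

noncomputable def Jminus : Ideal (MvPolynomial (Fin 3) ℚ) :=
  Ideal.span {3 * mb0 ^ 2 + 6 * ma1 * mb0 - ma0 * mb0, 2 * ma1 * mb0 - ma1 * ma0,
    12 * ma1 ^ 2 + ma1 * ma0, ma0 ^ 2 * mb0, 3 * ma0 ^ 3 + 32 * ma1 * ma0 ^ 2}

/-!
A `ℚ`-algebra map from a quotient of `ℚ[x₁, …, xₙ]` into a square-zero extension `ℚ ⊕ V`
has image in `ℚ ⊕ W`, where `W` is spanned by the `V`-components of the images of the `xᵢ`,
since products of elements of `V` vanish. So `R⁻`, generated by three elements, cannot map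
onto `ℚ ⊕ ℚ⁴`. On the other hand every generator of `J⁺` lies in the square of the ideal of
the variables, so sending `a0, a1, b0, b1` to the standard basis of `ℚ⁴` defines a surjection
`R⁺ → ℚ ⊕ ℚ⁴`.
-/

open TrivSqZeroExt

theorem TrivSqZeroExt.snd_aeval_mem_span {R M σ : Type*} [CommRing R] [AddCommGroup M]
    [Module R M] [Module Rᵐᵒᵖ M] [IsCentralScalar R M] (x : σ → TrivSqZeroExt R M)
    (p : MvPolynomial σ R) :
    (aeval x p).snd ∈ Submodule.span R (Set.range fun i => (x i).snd) := by
  induction p using MvPolynomial.induction_on with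
  | C a => simp [algebraMap_eq_inl]
  | add p q hp hq => simpa only [map_add, snd_add] using add_mem hp hq
  | mul_X p i hp =>
    rw [map_mul, aeval_X, snd_mul, op_smul_eq_smul]
    exact add_mem (Submodule.smul_mem _ _ (Submodule.subset_span ⟨i, rfl⟩))
      (Submodule.smul_mem _ _ hp)

theorem TrivSqZeroExt.finrank_le_card_of_surjective {K M σ : Type*} [Field K] [Fintype σ]
    [AddCommGroup M] [Module K M] [Module Kᵐᵒᵖ M] [IsCentralScalar K M]
    (f : MvPolynomial σ K →ₐ[K] TrivSqZeroExt K M) (hf : Function.Surjective f) :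
    Module.finrank K M ≤ Fintype.card σ := by
  have hspan : Submodule.span K (Set.range fun i => (f (X i)).snd) = ⊤ := by
    refine Submodule.eq_top_iff'.mpr fun m => ?_
    obtain ⟨p, hp⟩ := hf (inr m)
    have := snd_aeval_mem_span (fun i => f (X i)) p
    rwa [← MvPolynomial.comp_aeval_apply, aeval_X_left_apply, hp, snd_inr] at this
  have := finrank_range_le_card (R := K) fun i => (f (X i)).snd
  rwa [Set.finrank, hspan, finrank_top] at this

theorem TrivSqZeroExt.aeval_inr_single_surjective {R σ : Type*} [CommRing R] [Fintype σ]
    [DecidableEq σ] :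
    Function.Surjective
      (aeval (R := R) fun i : σ => (inr (Pi.single i 1) : TrivSqZeroExt R (σ → R))) := by
  intro y
  refine ⟨C y.fst + ∑ i, C (y.snd i) * X i, ?_⟩
  ext <;> simp [algebraMap_eq_inl, inl_mul_inr, fst_sum, snd_sum, Pi.single_apply]

theorem Jplus_le_ker_aeval_inr_single :
    Jplus ≤ RingHom.ker
      (aeval fun i : Fin 4 => (inr (Pi.single i 1) : TrivSqZeroExt ℚ (Fin 4 → ℚ))) := by
  simp only [Jplus, Ideal.span_le, Set.insert_subset_iff, Set.singleton_subset_iff,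
    SetLike.mem_coe, RingHom.mem_ker]
  simp [pa0, pa1, pb0, pb1, pow_succ, mul_assoc, inr_mul_inr]

theorem exists_surjective_quotient_Jplus_to_trivSqZeroExt :
    ∃ f : (MvPolynomial (Fin 4) ℚ ⧸ Jplus) →ₐ[ℚ] TrivSqZeroExt ℚ (Fin 4 → ℚ),
      Function.Surjective f :=
  ⟨Ideal.Quotient.liftₐ Jplus _ fun _ hp => Jplus_le_ker_aeval_inr_single hp,
    Function.Surjective.of_comp (g := Ideal.Quotient.mkₐ ℚ Jplus)
      aeval_inr_single_surjective⟩

theorem stmt8 :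
    IsEmpty ((MvPolynomial (Fin 4) ℚ ⧸ Jplus) ≃ₐ[ℚ] (MvPolynomial (Fin 3) ℚ ⧸ Jminus)) := by
  refine ⟨fun e => ?_⟩
  obtain ⟨f, hf⟩ := exists_surjective_quotient_Jplus_to_trivSqZeroExt
  have h := finrank_le_card_of_surjective
    ((f.comp e.symm.toAlgHom).comp (Ideal.Quotient.mkₐ ℚ Jminus))
    (hf.comp (e.symm.surjective.comp (Ideal.Quotient.mkₐ_surjective ℚ Jminus)))
  simp at h
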